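/- arXiv:2504.02648 — 4 statements merged into one kernel-verified Lean document; each statement's English description precedes it below -/
import Mathlib

section
/- For the myopic altruistic planner with reward r(b,q) = -β(q) - C·min(b,1-b,1-q), where β is nondecreasing and concave on [p,1] with β(p)=0, C>0, and p ∈ [1/2,1): the supremum of r(b,·) over q ∈ [p,1] is attained at q = 1 if min(b, 1-b, 1-p) > β(1)/C, and at q = p otherwise. -/
/-! The reward `q ↦ -β q - C * min b (min (1 - b) (1 - q))` is convex on `[p, 1]`: `-β` is convex and
the mistake probability is a minimum of affine functions of `q`, hence concave. So the reward is
maximised at an endpoint, and comparing `r(p) = -C * min b (min (1 - b) (1 - p))` with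
`r(1) = -β 1` decides which one. -/

open Set

lemma concaveOn_min_min_one_sub {s : Set ℝ} (hs : Convex ℝ s) (u v : ℝ) :
    ConcaveOn ℝ s fun q => min u (min v (1 - q)) :=
  (concaveOn_const u hs).inf <| (concaveOn_const v hs).inf <|
    (concaveOn_const 1 hs).sub (convexOn_id hs)

lemma ConcaveOn.convexOn_neg_sub_mul_min_min_one_sub {s : Set ℝ} {β : ℝ → ℝ}
    (hβ : ConcaveOn ℝ s β) {C : ℝ} (hC : 0 ≤ C) (u v : ℝ) :
    ConvexOn ℝ s fun q => -β q - C * min u (min v (1 - q)) :=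
  hβ.neg.sub <| (concaveOn_min_min_one_sub hβ.1 u v).smul hC

theorem myopic_altruistic_optimum_general (β : ℝ → ℝ) (C p b : ℝ)
    (hβconc : ConcaveOn ℝ (Set.Icc p 1) β)
    (hβp : β p = 0) (hC : 0 < C)
    (hb : b ∈ Set.Icc (0:ℝ) 1) :
    (min b (min (1 - b) (1 - p)) > β 1 / C →
      ∀ q ∈ Set.Icc p 1,
        -β q - C * min b (min (1 - b) (1 - q)) ≤
          -β 1 - C * min b (min (1 - b) (1 - 1))) ∧
    (min b (min (1 - b) (1 - p)) ≤ β 1 / C →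
      ∀ q ∈ Set.Icc p 1,
        -β q - C * min b (min (1 - b) (1 - q)) ≤
          -β p - C * min b (min (1 - b) (1 - p))) := by
  have hreward := hβconc.convexOn_neg_sub_mul_min_min_one_sub hC.le b (1 - b)
  have hendpoint : ∀ q ∈ Icc p 1, -β q - C * min b (min (1 - b) (1 - q)) ≤
      max (-β p - C * min b (min (1 - b) (1 - p))) (-β 1 - C * min b (min (1 - b) (1 - 1))) :=
    fun q hq => hreward.le_max_of_mem_Icc (left_mem_Icc.2 (hq.1.trans hq.2))
      (right_mem_Icc.2 (hq.1.trans hq.2)) hq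
  have hmistake_one : min b (min (1 - b) (1 - 1)) = 0 := by
    simp only [sub_self, min_eq_right (sub_nonneg.2 hb.2), min_eq_right hb.1]
  refine ⟨fun h q hq => (hendpoint q hq).trans (max_le ?_ le_rfl),
    fun h q hq => (hendpoint q hq).trans (max_le le_rfl ?_)⟩
  · rw [gt_iff_lt, div_lt_iff₀ hC] at h
    rw [hmistake_one, hβp]
    linarith
  · rw [le_div_iff₀ hC] at h
    rw [hmistake_one, hβp]
    linarith

/-- Myopic altruistic planner: with reward `r(b,q) = -β(q) - C·min(b,1-b,1-q)`,
`β` nondecreasing and concave on `[p,1]` with `β(p) = 0`, `C > 0`, `p ∈ [1/2,1)`,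
the supremum of `r(b,·)` over `q ∈ [p,1]` is attained at `q = 1` if
`min(b,1-b,1-p) > β(1)/C`, and at `q = p` otherwise. -/
theorem myopic_altruistic_optimum (β : ℝ → ℝ) (C p b : ℝ)
    (hβmono : MonotoneOn β (Set.Icc p 1))
    (hβconc : ConcaveOn ℝ (Set.Icc p 1) β)
    (hβp : β p = 0) (hC : 0 < C) (hp : p ∈ Set.Ico (1/2 : ℝ) 1)
    (hb : b ∈ Set.Icc (0:ℝ) 1) :
    (min b (min (1 - b) (1 - p)) > β 1 / C →
      ∀ q ∈ Set.Icc p 1,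
        -β q - C * min b (min (1 - b) (1 - q)) ≤
          -β 1 - C * min b (min (1 - b) (1 - 1))) ∧
    (min b (min (1 - b) (1 - p)) ≤ β 1 / C →
      ∀ q ∈ Set.Icc p 1,
        -β q - C * min b (min (1 - b) (1 - q)) ≤
          -β p - C * min b (min (1 - b) (1 - p))) :=
  myopic_altruistic_optimum_general β C p b hβconc hβp hC hb
end

section
/- The myopic altruistic optimal policy is a threshold policy: with t = β(1)/C if β(1) < C(1-p) and t = 1/2 otherwise, the optimizer of r(b,q) = -β(q) - C·min(b,1-b,1-q) over q ∈ [p,1] equals 1 for b ∈ (t, 1-t) and equals p otherwise. -/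
/-!
For fixed `b`, the cost `q ↦ β q + C * min b (min (1 - b) (1 - q))` is concave on `[p, 1]`, as a
sum of the concave `β` and a nonnegative multiple of a minimum of affine maps. A concave function
on an interval is minimised at an endpoint, so the optimal precision is `p` or `1`, with costs
`C * min b (min (1 - b) (1 - p))` and `β 1`. Comparing these two numbers gives the threshold `t`.
-/

theorem concaveOn_add_mul_min {s : Set ℝ} {β : ℝ → ℝ} {C : ℝ} (hβ : ConcaveOn ℝ s β)
    (hC : 0 ≤ C) (b : ℝ) :
    ConcaveOn ℝ s (fun q => β q + C * min b (min (1 - b) (1 - q))) := by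
  have hs := hβ.1
  have hpenalty : ConcaveOn ℝ s (fun q => min b (min (1 - b) (1 - q))) :=
    (concaveOn_const b hs).inf ((concaveOn_const (1 - b) hs).inf
      ((concaveOn_const 1 hs).sub (convexOn_id hs)))
  exact hβ.add (hpenalty.smul hC)

section Threshold

variable {a C p t b : ℝ}

theorem le_mul_min_of_mem_threshold (hC : 0 < C)
    (ht : t = if a < C * (1 - p) then a / C else 1 / 2) (hb : t < b ∧ b < 1 - t) :
    a ≤ C * min b (min (1 - b) (1 - p)) := by
  split_ifs at ht with hcase
  · subst ht
    have hCb : a < C * b := (div_lt_iff₀' hC).1 hb.1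
    have hCb' : a < C * (1 - b) := (div_lt_iff₀' hC).1 (by linarith)
    simp only [mul_min_of_nonneg _ _ hC.le, le_min_iff]
    exact ⟨hCb.le, hCb'.le, hcase.le⟩
  · linarith [hb.1, hb.2]

theorem mul_min_le_of_not_mem_threshold (hC : 0 < C)
    (ht : t = if a < C * (1 - p) then a / C else 1 / 2) (hb : ¬(t < b ∧ b < 1 - t)) :
    C * min b (min (1 - b) (1 - p)) ≤ a := by
  rw [mul_min_of_nonneg _ _ hC.le, mul_min_of_nonneg _ _ hC.le]
  split_ifs at ht with hcase
  · subst ht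
    rcases not_and_or.1 hb with hbt | hbt
    · exact min_le_of_left_le ((le_div_iff₀' hC).1 (not_lt.1 hbt))
    · have h1b : 1 - b ≤ a / C := by linarith [not_lt.1 hbt]
      exact min_le_of_right_le (min_le_of_left_le ((le_div_iff₀' hC).1 h1b))
  · exact min_le_of_right_le (min_le_of_right_le (not_lt.1 hcase))

end Threshold

theorem myopic_altruistic_threshold_general (β : ℝ → ℝ) (C p t : ℝ)
    (hβconc : ConcaveOn ℝ (Set.Icc p 1) β)
    (hβp : β p = 0) (hC : 0 < C)
    (ht : t = if β 1 < C * (1 - p) then β 1 / C else 1/2) :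
    ∀ b ∈ Set.Icc (0:ℝ) 1,
      ((t < b ∧ b < 1 - t) →
        ∀ q ∈ Set.Icc p 1,
          -β q - C * min b (min (1 - b) (1 - q)) ≤
            -β 1 - C * min b (min (1 - b) (1 - 1))) ∧
      (¬(t < b ∧ b < 1 - t) →
        ∀ q ∈ Set.Icc p 1,
          -β q - C * min b (min (1 - b) (1 - q)) ≤
            -β p - C * min b (min (1 - b) (1 - p))) := by
  intro b hb
  have hcost_one : min b (min (1 - b) (1 - 1)) = 0 := by
    rw [sub_self, min_eq_right (sub_nonneg.2 hb.2), min_eq_right hb.1]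
  have hendpoint : ∀ q ∈ Set.Icc p 1, min (C * min b (min (1 - b) (1 - p))) (β 1) ≤
      β q + C * min b (min (1 - b) (1 - q)) := fun q hq => by
    have hp1 : p ≤ 1 := hq.1.trans hq.2
    simpa only [hβp, hcost_one, zero_add, mul_zero, add_zero] using
      (concaveOn_add_mul_min hβconc hC.le b).min_le_of_mem_Icc
        (Set.left_mem_Icc.2 hp1) (Set.right_mem_Icc.2 hp1) hq
  refine ⟨fun hin q hq => ?_, fun hout q hq => ?_⟩
  · have hq_cost := hendpoint q hq
    rw [min_eq_right (le_mul_min_of_mem_threshold hC ht hin)] at hq_cost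
    rw [hcost_one]
    linarith
  · have hq_cost := hendpoint q hq
    rw [min_eq_left (mul_min_le_of_not_mem_threshold hC ht hout)] at hq_cost
    rw [hβp]
    linarith

/-- Threshold form of the myopic altruistic optimal policy: with
`t = β(1)/C` if `β(1) < C(1-p)` and `t = 1/2` otherwise, the maximizer of
`r(b,q) = -β(q) - C·min(b,1-b,1-q)` over `q ∈ [p,1]` is `q = 1` for
`b ∈ (t, 1-t)` and `q = p` otherwise. -/
theorem myopic_altruistic_threshold (β : ℝ → ℝ) (C p t : ℝ)
    (hβmono : MonotoneOn β (Set.Icc p 1))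
    (hβcont : ContinuousOn β (Set.Icc p 1))
    (hβconc : ConcaveOn ℝ (Set.Icc p 1) β)
    (hβp : β p = 0) (hC : 0 < C) (hp : p ∈ Set.Ico (1/2 : ℝ) 1)
    (ht : t = if β 1 < C * (1 - p) then β 1 / C else 1/2) :
    ∀ b ∈ Set.Icc (0:ℝ) 1,
      ((t < b ∧ b < 1 - t) →
        ∀ q ∈ Set.Icc p 1,
          -β q - C * min b (min (1 - b) (1 - q)) ≤
            -β 1 - C * min b (min (1 - b) (1 - 1))) ∧
      (¬(t < b ∧ b < 1 - t) →
        ∀ q ∈ Set.Icc p 1,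
          -β q - C * min b (min (1 - b) (1 - q)) ≤
            -β p - C * min b (min (1 - b) (1 - p))) :=
  myopic_altruistic_threshold_general β C p t hβconc hβp hC ht
end

section
/- For the biased planner's instantaneous reward r_B(b,q) defined as -β(|q-p|) - C·z(b,q) when q ≥ max(b,1-b), as -β(|q-p|) - C when b < 1-q, and as -β(|q-p|) when b > q (with z(b,q)=b+q-2bq): for b ∈ (p,1], the unique maximizer over q ∈ [1/2,1] is q = p, with optimal value 0. -/
/-! Since `z(b,q) ≥ 0` on `[0,1]²` and `C > 0`, every branch of `rB` is at most `-β |q - p|`,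
which is negative for `q ≠ p`. At `q = p < b` the signal is not decisive and no cost is paid,
so the reward is `-β 0 = 0`. -/

/-- The biased planner's instantaneous reward. -/
noncomputable def rB (β : ℝ → ℝ) (C p b q : ℝ) : ℝ :=
  if max b (1 - b) ≤ q then -β |q - p| - C * (b + q - 2*b*q)
  else if b < 1 - q then -β |q - p| - C
  else -β |q - p|

section

variable {β : ℝ → ℝ} {C p b q : ℝ}

theorem rB_of_lt_of_one_sub_le (hqb : q < b) (hbq : 1 - b ≤ q) : rB β C p b q = -β |q - p| := by
  have hnot : ¬ max b (1 - b) ≤ q := fun h => (le_max_left b (1 - b)).trans h |>.not_gt hqb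
  rw [rB, if_neg hnot, if_neg (by linarith)]

theorem rB_le_neg_beta (hC : 0 ≤ C) (hb : b ∈ Set.Icc (0 : ℝ) 1) (hq : q ∈ Set.Icc (0 : ℝ) 1) :
    rB β C p b q ≤ -β |q - p| := by
  obtain ⟨hb0, hb1⟩ := hb
  obtain ⟨hq0, hq1⟩ := hq
  -- `z(b,q) = b(1-q) + q(1-b)`
  have hz : 0 ≤ b + q - 2 * b * q := by
    nlinarith [mul_nonneg hb0 (sub_nonneg.2 hq1), mul_nonneg hq0 (sub_nonneg.2 hb1)]
  unfold rB
  split_ifs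
  · linarith [mul_nonneg hC hz]
  · linarith
  · exact le_rfl

end

theorem biased_myopic_high_belief_general (β : ℝ → ℝ) (C p : ℝ)
    (hβ0 : β 0 = 0) (hβpos : ∀ x ∈ Set.Ioc (0:ℝ) (1/2), 0 < β x)
    (hC : 0 < C) (hp : p ∈ Set.Icc (1/2 : ℝ) 1)
    (b : ℝ) (hb : b ∈ Set.Ioc p 1) :
    rB β C p b p = 0 ∧
    ∀ q ∈ Set.Icc (1/2 : ℝ) 1, q ≠ p → rB β C p b q < rB β C p b p := by
  obtain ⟨hp1, hp2⟩ := hp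
  obtain ⟨hpb, hb1⟩ := hb
  have hval : rB β C p b p = 0 := by
    rw [rB_of_lt_of_one_sub_le hpb (by linarith), sub_self, abs_zero, hβ0, neg_zero]
  refine ⟨hval, fun q ⟨hq1, hq2⟩ hqp => ?_⟩
  have hdist : |q - p| ∈ Set.Ioc (0 : ℝ) (1/2) :=
    ⟨abs_pos.2 (sub_ne_zero.2 hqp), abs_le.2 ⟨by linarith, by linarith⟩⟩
  calc rB β C p b q ≤ -β |q - p| :=
        rB_le_neg_beta hC.le ⟨by linarith, hb1⟩ ⟨by linarith, hq2⟩
    _ < rB β C p b p := by linarith [hβpos _ hdist]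

/-- For beliefs `b ∈ (p,1]`, the unique maximizer of the biased myopic reward over
`q ∈ [1/2,1]` is `q = p`, with optimal value `0`. -/
theorem biased_myopic_high_belief (β : ℝ → ℝ) (C p : ℝ)
    (hβmono : MonotoneOn β (Set.Icc (0:ℝ) (1/2)))
    (hβcont : ContinuousOn β (Set.Icc (0:ℝ) (1/2)))
    (hβconc : ConcaveOn ℝ (Set.Icc (0:ℝ) (1/2)) β)
    (hβ0 : β 0 = 0) (hβpos : ∀ x ∈ Set.Ioc (0:ℝ) (1/2), 0 < β x)
    (hC : 0 < C) (hp : p ∈ Set.Icc (1/2 : ℝ) 1)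
    (b : ℝ) (hb : b ∈ Set.Ioc p 1) :
    rB β C p b p = 0 ∧
    ∀ q ∈ Set.Icc (1/2 : ℝ) 1, q ≠ p → rB β C p b q < rB β C p b p :=
  biased_myopic_high_belief_general β C p hβ0 hβpos hC hp b hb
end

section
/- For the biased myopic planner with b ∈ [0, 1-p): the maximizer of r_B(b,·) over q ∈ [1/2,1] lies in {p, 1-b}. In particular, precision 1 is dominated by precision 1-b: r_B(b,1) ≤ r_B(b,1-b). -/
/-!
Below `1 - b` the reward is `-β |q - p| - C`, maximal at `q = p`. From `1 - b` on it is
`-β (q - p) - C * (b + q - 2bq)`, whose two parts both decrease in `q` when `b ≤ 1/2`, so it is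
maximal at `q = 1 - b`. The better of `p` and `1 - b` is therefore a global maximizer.
-/

theorem exists_mem_pair_forall_le {α β : Type*} [LinearOrder β] {f : α → β} {s : Set α}
    {x y : α} (h : ∀ q ∈ s, f q ≤ f x ∨ f q ≤ f y) :
    ∃ z ∈ ({x, y} : Set α), ∀ q ∈ s, f q ≤ f z := by
  rcases le_total (f x) (f y) with hxy | hyx
  · exact ⟨y, Or.inr rfl, fun q hq => (h q hq).elim (fun hx => hx.trans hxy) id⟩
  · exact ⟨x, Or.inl rfl, fun q hq => (h q hq).elim id (fun hy => hy.trans hyx)⟩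

section rB

variable {β : ℝ → ℝ} {C p b q : ℝ}

theorem rB_of_lt (hq : q < 1 - b) : rB β C p b q = -β |q - p| - C := by
  rw [rB, if_neg (not_le.2 (hq.trans_le (le_max_right _ _))), if_pos (by linarith)]

theorem rB_of_le (hb : b ≤ 1 / 2) (hq : 1 - b ≤ q) :
    rB β C p b q = -β |q - p| - C * (b + q - 2 * b * q) := by
  rw [rB, if_pos (max_le (by linarith) hq)]

theorem rB_le_rB_of_lt (hβ : MonotoneOn β (Set.Icc 0 (1 / 2))) (hq : q < 1 - b)
    (hp : p < 1 - b) (hqp : |q - p| ≤ 1 / 2) : rB β C p b q ≤ rB β C p b p := by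
  rw [rB_of_lt hq, rB_of_lt hp, sub_self, abs_zero]
  have : β 0 ≤ β |q - p| := hβ ⟨le_rfl, by norm_num⟩ ⟨abs_nonneg _, hqp⟩ (abs_nonneg _)
  linarith

theorem rB_antitoneOn (hβ : MonotoneOn β (Set.Icc 0 (1 / 2))) (hC : 0 ≤ C) (hb : b ≤ 1 / 2)
    (hp : p ≤ 1 - b) : AntitoneOn (rB β C p b) (Set.Icc (1 - b) (p + 1 / 2)) := by
  intro q hq q' hq' hqq'
  rw [rB_of_le hb hq.1, rB_of_le hb hq'.1, abs_of_nonneg (by linarith [hq.1] : 0 ≤ q - p),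
    abs_of_nonneg (by linarith [hq'.1] : 0 ≤ q' - p)]
  have hβqq' : β (q - p) ≤ β (q' - p) :=
    hβ ⟨by linarith [hq.1], by linarith [hq.2]⟩ ⟨by linarith [hq'.1], by linarith [hq'.2]⟩
      (by linarith)
  have hz : b + q - 2 * b * q ≤ b + q' - 2 * b * q' := by
    nlinarith [mul_nonneg (by linarith : (0 : ℝ) ≤ 1 - 2 * b) (sub_nonneg.2 hqq')]
  linarith [mul_le_mul_of_nonneg_left hz hC]

end rB

theorem biased_myopic_low_belief_general (β : ℝ → ℝ) (C p : ℝ)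
    (hβmono : MonotoneOn β (Set.Icc (0:ℝ) (1/2)))
    (hC : 0 < C) (hp : p ∈ Set.Ioc (1/2 : ℝ) 1)
    (b : ℝ) (hb : b ∈ Set.Ico (0:ℝ) (1 - p)) :
    (∃ qstar ∈ ({p, 1 - b} : Set ℝ),
        ∀ q ∈ Set.Icc (1/2 : ℝ) 1, rB β C p b q ≤ rB β C p b qstar) ∧
    rB β C p b 1 ≤ rB β C p b (1 - b) := by
  obtain ⟨hp₁, hp₂⟩ := hp
  obtain ⟨hb₀, hb₁⟩ := hb
  have hdec := rB_antitoneOn hβmono hC.le (p := p) (b := b) (by linarith) (by linarith)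
  have hupper : ∀ q ∈ Set.Icc (1 / 2 : ℝ) 1, 1 - b ≤ q → rB β C p b q ≤ rB β C p b (1 - b) :=
    fun q hq hbq => hdec ⟨le_rfl, by linarith⟩ ⟨hbq, by linarith [hq.2]⟩ hbq
  refine ⟨exists_mem_pair_forall_le fun q hq => ?_, hupper 1 ⟨by linarith, le_rfl⟩ (by linarith)⟩
  rcases lt_or_ge q (1 - b) with hbq | hbq
  · exact .inl <| rB_le_rB_of_lt hβmono hbq (by linarith)
      (abs_le.2 ⟨by linarith [hq.1], by linarith [hq.2]⟩)
  · exact .inr <| hupper q hq hbq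

/-- For `b ∈ [0, 1-p)`, the biased myopic optimum over `q ∈ [1/2,1]` is attained
within `{p, 1-b}`; in particular precision `1` is dominated by `1-b`. -/
theorem biased_myopic_low_belief (β : ℝ → ℝ) (C p : ℝ)
    (hβmono : MonotoneOn β (Set.Icc (0:ℝ) (1/2)))
    (hβconc : ConcaveOn ℝ (Set.Icc (0:ℝ) (1/2)) β)
    (hβ0 : β 0 = 0) (hC : 0 < C) (hp : p ∈ Set.Ioc (1/2 : ℝ) 1)
    (b : ℝ) (hb : b ∈ Set.Ico (0:ℝ) (1 - p)) :
    (∃ qstar ∈ ({p, 1 - b} : Set ℝ),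
        ∀ q ∈ Set.Icc (1/2 : ℝ) 1, rB β C p b q ≤ rB β C p b qstar) ∧
    rB β C p b 1 ≤ rB β C p b (1 - b) :=
  biased_myopic_low_belief_general β C p hβmono hC hp b hb
end
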